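/- arXiv:math/0703681 — 6 statements merged into one kernel-verified Lean document; each statement's English description precedes it below -/
import Mathlib

section
/- Let J be an abelian subgroup of the symmetric group Sym_n. Then there exists an involution x in Sym_n (an element with x^2 = 1) such that x * y * x⁻¹ = y⁻¹ for all y in J. -/
/-- Every abelian subgroup of `Sym_n` is inverted by an involution of `Sym_n`. -/
theorem abelian_subgroup_inverted_by_involution (n : ℕ)
    (J : Subgroup (Equiv.Perm (Fin n)))
    (hJ : ∀ a ∈ J, ∀ b ∈ J, a * b = b * a) :
    ∃ x : Equiv.Perm (Fin n), x ^ 2 = 1 ∧ ∀ y ∈ J, x * y * x⁻¹ = y⁻¹ := by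
  classical
  have hcomm : ∀ a b : J, a * b = b * a := fun a b =>
    Subtype.ext (hJ a a.2 b b.2)
  -- base point of each orbit
  let base : Fin n → Fin n := fun p => (Quotient.mk (MulAction.orbitRel J (Fin n)) p).out
  have hbase_mem : ∀ p, p ∈ MulAction.orbit J (base p) := by
    intro p
    have h' : base p ∈ MulAction.orbit J p :=
      @Quotient.mk_out _ (MulAction.orbitRel J (Fin n)) p
    obtain ⟨g, hg⟩ := h'
    have hg' : g • p = base p := hg
    exact ⟨g⁻¹, show g⁻¹ • base p = p by rw [← hg']; exact inv_smul_smul g p⟩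
  have hbase_eq : ∀ p q : Fin n, q ∈ MulAction.orbit J p → base q = base p := by
    intro p q hq
    have : Quotient.mk (MulAction.orbitRel J (Fin n)) q
        = Quotient.mk (MulAction.orbitRel J (Fin n)) p := Quotient.sound hq
    simp only [base, this]
  -- choose a transporter from the base point
  have hex : ∀ p : Fin n, ∃ g : J, g • base p = p := fun p => hbase_mem p
  let g : Fin n → J := fun p => (hex p).choose
  have hg : ∀ p, g p • base p = p := fun p => (hex p).choose_spec
  -- the inversion map
  let f : Fin n → Fin n := fun p => (g p)⁻¹ • base p
  -- well-definedness: f p depends only on any transporter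
  have hkey : ∀ (p : Fin n) (k : J), k • base p = p → f p = k⁻¹ • base p := by
    intro p k hk
    have hc : k • ((g p)⁻¹ • base p) = k • (k⁻¹ • base p) := by
      rw [smul_inv_smul, smul_smul, hcomm, ← smul_smul, hk]
      exact inv_smul_eq_iff.mpr (hg p).symm
    exact smul_left_cancel k hc
  have hbase_f : ∀ p, base (f p) = base p := by
    intro p
    have h1 : f p ∈ MulAction.orbit J (base p) := ⟨(g p)⁻¹, rfl⟩
    have h2 : base p ∈ MulAction.orbit J p := by
      obtain ⟨k, hk⟩ := hbase_mem p
      have hk' : k • base p = p := hk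
      exact ⟨k⁻¹, inv_smul_eq_iff.mpr hk'.symm⟩
    rw [hbase_eq _ _ h1, hbase_eq _ _ h2]
  have hinv : Function.Involutive f := by
    intro p
    have h1 : (g p)⁻¹ • base (f p) = f p := by rw [hbase_f]
    have h2 := hkey (f p) ((g p)⁻¹) h1
    rw [h2, hbase_f, inv_inv, hg]
  -- conjugation property, pointwise
  have hconj : ∀ (y : J) (p : Fin n),
      f ((y : Equiv.Perm (Fin n)) p) = (y⁻¹ : J) • f p := by
    intro y p
    have hb : base ((y : Equiv.Perm (Fin n)) p) = base p := hbase_eq p _ ⟨y, rfl⟩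
    have h1 : (y * g p) • base ((y : Equiv.Perm (Fin n)) p) = (y : Equiv.Perm (Fin n)) p := by
      rw [hb, mul_smul, hg p]
      rfl
    have h2 := hkey _ _ h1
    rw [h2, hb, mul_inv_rev, mul_smul, smul_smul, hcomm, ← smul_smul]
  refine ⟨hinv.toPerm f, ?_, ?_⟩
  · refine Equiv.ext fun p => ?_
    simp [pow_two, hinv p]
  · intro y hy
    refine Equiv.ext fun p => ?_
    have hx : (hinv.toPerm f)⁻¹ = hinv.toPerm f := rfl
    rw [hx]
    simp only [Equiv.Perm.mul_apply, Function.Involutive.coe_toPerm]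
    calc f (y (f p)) = (⟨y, hy⟩⁻¹ : J) • f (f p) := hconj ⟨y, hy⟩ (f p)
      _ = y⁻¹ p := by rw [hinv p]; rfl
end

section
/- Let J be an abelian subgroup of the symmetric group Sym_n and let r be an integer coprime to the order of J. Then there exists x in Sym_n such that x * y * x⁻¹ = y^r for all y in J. -/
/-- If `J` is an abelian subgroup of `Sym_n` and `r` is coprime to `|J|`, then some
`x ∈ Sym_n` conjugates every element of `J` to its `r`-th power. -/
theorem abelian_subgroup_power_map_realized (n : ℕ)
    (J : Subgroup (Equiv.Perm (Fin n)))
    (hJ : ∀ a ∈ J, ∀ b ∈ J, a * b = b * a)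
    (r : ℤ) (hr : Int.gcd r (Nat.card J) = 1) :
    ∃ x : Equiv.Perm (Fin n), ∀ y ∈ J, x * y * x⁻¹ = y ^ r := by
  classical
  have hcomm : ∀ a b : J, Commute a b := fun a b => Subtype.ext (hJ a a.2 b b.2)
  letI s := MulAction.orbitRel J (Fin n)
  let rep : Fin n → Fin n := fun p => (Quotient.mk s p).out
  have hrep_orbit : ∀ p, p ∈ MulAction.orbit J (rep p) := by
    intro p
    have h : s.r (rep p) p := Quotient.mk_out p
    exact s.symm' h
  have hrep_smul : ∀ (z : J) (p : Fin n), rep (z • p) = rep p := by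
    intro z p
    have : (Quotient.mk s (z • p)) = Quotient.mk s p :=
      Quotient.sound (MulAction.mem_orbit p z)
    simp only [rep, this]
  have hrep_rep : ∀ p, rep (rep p) = rep p := by
    intro p
    have : (Quotient.mk s (rep p)) = Quotient.mk s p := Quotient.out_eq _
    simp only [rep, this]
  let c : Fin n → J := fun p => (MulAction.mem_orbit_iff.mp (hrep_orbit p)).choose
  have hc : ∀ p, c p • rep p = p := fun p =>
    (MulAction.mem_orbit_iff.mp (hrep_orbit p)).choose_spec
  let F : ℤ → Fin n → Fin n := fun k p => (c p ^ k) • rep p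
  have hstab : ∀ (w : J) (p : Fin n), w • rep p = rep p → ∀ k : ℤ, (w ^ k) • rep p = rep p := by
    intro w p hw k
    have hw' : w ∈ MulAction.stabilizer J (rep p) := hw
    have : w ^ k ∈ MulAction.stabilizer J (rep p) := zpow_mem hw' k
    exact this
  have hFsmul : ∀ (k : ℤ) (z : J) (p : Fin n), F k (z • p) = z ^ k • F k p := by
    intro k z p
    have e1 : rep (z • p) = rep p := hrep_smul z p
    have e2 : c (z • p) • rep p = (z * c p) • rep p := by
      have h1 : c (z • p) • rep (z • p) = z • p := hc (z • p)
      rw [e1] at h1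
      rw [h1, mul_smul, hc]
    set w : J := (z * c p)⁻¹ * c (z • p) with hwdef
    have hw : w • rep p = rep p := by
      rw [hwdef, mul_smul, e2, ← mul_smul, inv_mul_cancel, one_smul]
    have hcz : c (z • p) = (z * c p) * w := by
      rw [hwdef, ← mul_assoc, mul_inv_cancel, one_mul]
    show (c (z • p) ^ k) • rep (z • p) = z ^ k • (c p ^ k) • rep p
    rw [e1, hcz, (hcomm (z * c p) w).mul_zpow, (hcomm z (c p)).mul_zpow,
      mul_smul, mul_smul, hstab w p hw k]
  have hFrep : ∀ (k : ℤ) (p : Fin n), F k (rep p) = rep p := by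
    intro k p
    have h1 : c (rep p) • rep p = rep p := by
      have := hc (rep p); rwa [hrep_rep p] at this
    show (c (rep p) ^ k) • rep (rep p) = rep p
    rw [hrep_rep p, hstab _ _ h1 k]
  -- arithmetic
  obtain ⟨u, v, huv⟩ := Int.isCoprime_iff_gcd_eq_one.mpr hr
  have hcard : ∀ y : J, y ^ (Nat.card J : ℤ) = 1 := by
    intro y
    rw [zpow_natCast, pow_card_eq_one']
  have hpow : ∀ y : J, y ^ (r * u) = y := by
    intro y
    have : r * u = 1 - (Nat.card J : ℤ) * v := by linarith [huv]
    rw [this, zpow_sub, zpow_one, zpow_mul, hcard, one_zpow, inv_one, mul_one]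
  have hFur : ∀ p, F u (F r p) = p := by
    intro p
    show F u ((c p ^ r) • rep p) = p
    rw [hFsmul u (c p ^ r) (rep p), hFrep u p, ← zpow_mul, hpow, hc]
  have hFru : ∀ p, F r (F u p) = p := by
    intro p
    show F r ((c p ^ u) • rep p) = p
    rw [hFsmul r (c p ^ u) (rep p), hFrep r p, ← zpow_mul, mul_comm u r, hpow, hc]
  refine ⟨⟨F r, F u, hFur, hFru⟩, ?_⟩
  intro y hy
  rw [mul_inv_eq_iff_eq_mul]
  apply Equiv.ext
  intro p
  show F r (y p) = (y ^ r) (F r p)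
  have : y p = (⟨y, hy⟩ : J) • p := rfl
  rw [this, hFsmul r ⟨y, hy⟩ p]
  have : ((⟨y, hy⟩ : J) ^ r • F r p) = ((((⟨y, hy⟩ : J) ^ r : J) : Equiv.Perm (Fin n))) (F r p) := rfl
  rw [this, SubgroupClass.coe_zpow]
end

section
/- Let J be an abelian subgroup of the symmetric group Sym_n such that every nontrivial orbit of J on {1,...,n} has even size, and let r be an integer coprime to |J|. Then there exists an even permutation x ∈ Alt_n with x * y * x⁻¹ = y^r for all y ∈ J. -/
open Equiv Equiv.Perm Finset

private lemma mulRight_pow' {G : Type*} [Group G] (a : G) (n : ℕ) :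
    (Equiv.mulRight a : Equiv.Perm G) ^ n = Equiv.mulRight (a ^ n) := by
  induction n with
  | zero => ext x; simp
  | succ n ih =>
    ext x
    rw [pow_succ']
    simp only [Equiv.Perm.coe_mul, Function.comp_apply, ih, Equiv.coe_mulRight, pow_succ']
    rw [mul_assoc, ← pow_succ, ← pow_succ']

private lemma mulRight_zpow' {G : Type*} [Group G] (a : G) (k : ℤ) :
    (Equiv.mulRight a : Equiv.Perm G) ^ k = Equiv.mulRight (a ^ k) := by
  cases k with
  | ofNat n => simpa using mulRight_pow' a n
  | negSucc n =>
    rw [zpow_negSucc, zpow_negSucc, mulRight_pow']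
    ext x
    simp [Equiv.Perm.inv_def, Equiv.mulRight_symm]

private lemma sign_fpf_involution {α : Type*} [Fintype α] [DecidableEq α] (π : Equiv.Perm α)
    (h2 : ∀ a, π (π a) = a) (hf : ∀ a, π a ≠ a) :
    Equiv.Perm.sign π = (-1) ^ (Fintype.card α / 2) := by
  rcases isEmpty_or_nonempty α with h | h
  · have : π = 1 := by ext a; exact (IsEmpty.false a).elim
    simp [this, Fintype.card_eq_zero]
  · have hπ1 : π ≠ 1 := by
      obtain ⟨a⟩ := h
      intro hh
      exact hf a (by rw [hh]; rfl)
    have hord : orderOf π = 2 := by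
      have hdvd : orderOf π ∣ 2 := orderOf_dvd_of_pow_eq_one (by ext a; simp [pow_succ, h2])
      rcases (Nat.dvd_prime Nat.prime_two).mp hdvd with h1 | h2'
      · exact absurd (orderOf_eq_one_iff.mp h1) hπ1
      · exact h2'
    have hct : ∀ c ∈ π.cycleType, c = 2 := by
      intro c hc
      have h2le := Equiv.Perm.two_le_of_mem_cycleType hc
      have hdvd : c ∣ 2 := by
        rw [← hord, ← Equiv.Perm.lcm_cycleType]; exact Multiset.dvd_lcm hc
      have := Nat.le_of_dvd (by norm_num) hdvd
      omega
    have hsupp : π.support = Finset.univ := by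
      rw [Finset.eq_univ_iff_forall]; intro a; rw [Equiv.Perm.mem_support]; exact hf a
    have hsum : π.cycleType.sum = Fintype.card α := by
      rw [Equiv.Perm.sum_cycleType, hsupp, Finset.card_univ]
    have hrep : π.cycleType = Multiset.replicate (Multiset.card π.cycleType) 2 :=
      Multiset.eq_replicate_card.mpr hct
    have hcard2 : 2 * Multiset.card π.cycleType = Fintype.card α := by
      rw [← hsum]
      conv_rhs => rw [hrep]
      simp [Multiset.sum_replicate, mul_comm]
    rw [Equiv.Perm.sign_of_cycleType, hsum]
    have hdiv : Fintype.card α / 2 = Multiset.card π.cycleType := by omega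
    rw [hdiv, ← hcard2, pow_add, pow_mul]
    norm_num
universe u v

private lemma sign_decomp_free {X : Type u} {G : Type v} [Group G] [Fintype G] [DecidableEq G] [Fintype X]
    [DecidableEq X] [MulAction G X]
    (hfree : ∀ (g : G) (x : X), g • x = x → g = 1)
    (π : Equiv.Perm X) (hπ : ∀ (g : G) (x : X), π (g • x) = g • π x) :
    ∃ (Y : Type u) (_ : Fintype Y) (_ : DecidableEq Y) (q : X → Y) (s : Y → X) (h : Equiv.Perm Y) (c : Y → G),
      (∀ (g : G) (x : X), q (g • x) = q x) ∧ (∀ x, q (π x) = h (q x)) ∧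
      (∀ y, π (s y) = c y • s (h y)) ∧ (∀ y, q (s y) = y) ∧
      Fintype.card X = Fintype.card Y * Fintype.card G ∧
      Equiv.Perm.sign π = Equiv.Perm.sign h ^ Fintype.card G *
        ∏ y, Equiv.Perm.sign (Equiv.mulRight (c y) : Equiv.Perm G) := by
  classical
  set σ := MulAction.orbitRel G X with hσ
  let Y := Quotient σ
  letI : Fintype Y := Fintype.ofFinite Y
  letI : DecidableEq Y := Classical.decEq Y
  let q : X → Y := fun x => Quotient.mk σ x
  let s : Y → X := Quotient.out
  have hqs : ∀ y, q (s y) = y := fun y => Quotient.out_eq y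
  have hqg : ∀ (g : G) (x : X), q (g • x) = q x := by
    intro g x
    exact Quotient.sound (MulAction.orbitRel_apply.mpr (MulAction.mem_orbit x g))
  have hsur : ∀ x : X, ∃ g : G, g • s (q x) = x := by
    intro x
    have h1 : s (q x) ∈ MulAction.orbit G x := by
      rw [← MulAction.orbitRel_apply (G := G)]
      exact Quotient.exact (hqs (q x))
    obtain ⟨g, hg⟩ := MulAction.mem_orbit_iff.mp h1
    exact ⟨g⁻¹, by rw [← hg, inv_smul_smul]⟩
  let ψ : Y × G → X := fun p => p.2 • s p.1
  have hqψ : ∀ (y : Y) (g : G), q (ψ (y, g)) = y := by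
    intro y g
    show q (g • s y) = y
    rw [hqg, hqs]
  have hψbij : Function.Bijective ψ := by
    constructor
    · rintro ⟨y, g⟩ ⟨y', g'⟩ hh
      have hy : y = y' := by rw [← hqψ y g, ← hqψ y' g', hh]
      subst hy
      have : (g'⁻¹ * g) • s y = s y := by
        rw [mul_smul]
        show g'⁻¹ • ψ (y, g) = s y
        rw [hh]
        exact inv_smul_smul g' (s y)
      have hg1 : g' = g := inv_mul_eq_one.mp (hfree _ _ this)
      rw [hg1]
    · intro x
      obtain ⟨g, hg⟩ := hsur x
      exact ⟨(q x, g), hg⟩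
  let e : Y × G ≃ X := Equiv.ofBijective ψ hψbij
  have hcard : Fintype.card X = Fintype.card Y * Fintype.card G := by
    rw [← Fintype.card_prod]
    exact (Fintype.card_congr e).symm
  let h₀ : Y → Y := fun y => q (π (s y))
  have hc0 : ∀ y, ∃ g : G, π (s y) = g • s (h₀ y) := by
    intro y
    obtain ⟨g, hg⟩ := hsur (π (s y))
    exact ⟨g, hg.symm⟩
  choose c hcc using hc0
  have hkey : ∀ (y : Y) (g : G), π (ψ (y, g)) = ψ (h₀ y, g * c y) := by
    intro y g
    show π (g • s y) = (g * c y) • s (h₀ y)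
    rw [hπ, hcc y, smul_smul]
  have hqπ : ∀ x, q (π x) = h₀ (q x) := by
    intro x
    obtain ⟨g, hg⟩ := hsur x
    conv_lhs => rw [← hg]
    have : π (g • s (q x)) = ψ (h₀ (q x), g * c (q x)) := hkey (q x) g
    rw [this, hqψ]
  have hinj : Function.Injective h₀ := by
    intro y y' hh
    have h1 : π (s y) = c y • s (h₀ y) := hcc y
    have h2 : π (s y') = c y' • s (h₀ y) := by rw [hcc y', hh]
    have h3 : π (s y') = (c y' * (c y)⁻¹) • π (s y) := by
      rw [h1, h2, smul_smul, mul_assoc, inv_mul_cancel, mul_one]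
    have h4 : π (s y') = π ((c y' * (c y)⁻¹) • s y) := by rw [hπ, h3]
    have h5 : s y' = (c y' * (c y)⁻¹) • s y := π.injective h4
    rw [← hqs y', h5, hqg, hqs]
  let hp : Equiv.Perm Y := Equiv.ofBijective h₀ (Finite.injective_iff_bijective.mp hinj)
  let A : Equiv.Perm (Y × G) := Equiv.prodCongrRight fun y => Equiv.mulRight (c y)
  let B : Equiv.Perm (Y × G) := Equiv.prodCongr hp (Equiv.refl G)
  have hπ' : e.symm.permCongr π = A.trans B := by
    apply Equiv.ext
    rintro ⟨y, g⟩
    have h1 : e.symm.permCongr π (y, g) = e.symm (π (e (y, g))) := by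
      simp [Equiv.permCongr_apply]
    rw [h1]
    have h2 : e (y, g) = ψ (y, g) := rfl
    rw [h2, hkey]
    have h3 : ψ (h₀ y, g * c y) = e (h₀ y, g * c y) := rfl
    rw [h3, Equiv.symm_apply_apply]
    show (h₀ y, g * c y) = B (A (y, g))
    simp [A, B, hp, Equiv.ofBijective_apply]
  have hsign : Equiv.Perm.sign π = Equiv.Perm.sign hp ^ Fintype.card G *
      ∏ y, Equiv.Perm.sign (Equiv.mulRight (c y) : Equiv.Perm G) := by
    have s1 : Equiv.Perm.sign (e.symm.permCongr π) = Equiv.Perm.sign π :=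
      Equiv.Perm.sign_permCongr e.symm π
    rw [← s1, hπ']
    have s2 : (A.trans B : Equiv.Perm (Y × G)) = B * A := rfl
    rw [s2, map_mul]
    have s3 : Equiv.Perm.sign A = ∏ y, Equiv.Perm.sign (Equiv.mulRight (c y) : Equiv.Perm G) :=
      Equiv.Perm.sign_prodCongrRight fun y => Equiv.mulRight (c y)
    have s4 : Equiv.Perm.sign B = Equiv.Perm.sign hp ^ Fintype.card G := by
      have : B = Equiv.prodCongrLeft fun _ : G => hp := by
        rw [← Equiv.prodCongr_refl_right]
      rw [this, Equiv.Perm.sign_prodCongrLeft]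
      simp [Finset.prod_const, Finset.card_univ]
    rw [s3, s4]
  exact ⟨Y, inferInstance, inferInstance, q, s, hp, c, hqg, (fun x => hqπ x), hcc, hqs, hcard, hsign⟩
private lemma sign_eq_one_of_free_equivariant {X : Type u} {G : Type v} [Group G] [Fintype G]
    [DecidableEq G] [Fintype X] [DecidableEq X] [MulAction G X]
    (hfree : ∀ (g : G) (x : X), g • x = x → g = 1)
    (hsq : ∀ g : G, g * g = 1) (h4 : 4 ∣ Fintype.card G)
    (π : Equiv.Perm X) (hπ : ∀ (g : G) (x : X), π (g • x) = g • π x) :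
    Equiv.Perm.sign π = 1 := by
  obtain ⟨Y, hY, hYd, q, s, h, c, hqg, hqπ, hcc, hqs, hcard, hsign⟩ := sign_decomp_free hfree π hπ
  obtain ⟨t, ht⟩ := h4
  rw [hsign]
  have h1 : Equiv.Perm.sign h ^ Fintype.card G = 1 := by
    rw [ht, (by ring : 4 * t = 2 * (2 * t)), pow_mul, Int.units_sq, one_pow]
  have h2 : ∀ y : Y, Equiv.Perm.sign (Equiv.mulRight (c y) : Equiv.Perm G) = 1 := by
    intro y
    by_cases hcy : c y = 1
    · rw [hcy]
      have : (Equiv.mulRight (1 : G) : Equiv.Perm G) = 1 := by ext x; simp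
      rw [this, map_one]
    · have hs := sign_fpf_involution (Equiv.mulRight (c y) : Equiv.Perm G)
        (fun a => by simp [mul_assoc, hsq (c y)])
        (fun a => by simp [hcy])
      rw [hs, ht, (by omega : 4 * t / 2 = 2 * t), pow_mul, Int.units_sq, one_pow]
  rw [h1, one_mul]
  exact Finset.prod_eq_one fun y _ => h2 y

private lemma sign_mulLeft_comm {G : Type*} [Group G] [Fintype G] [DecidableEq G]
    (hc : ∀ a b : G, a * b = b * a) (u : G) :
    Equiv.Perm.sign (Equiv.mulLeft u : Equiv.Perm G)
      = ((-1 : ℤˣ) ^ (orderOf u - 1)) ^ (Fintype.card G / orderOf u) := by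
  rcases eq_or_ne u 1 with rfl | hu
  · have : (Equiv.mulLeft (1 : G) : Equiv.Perm G) = 1 := by ext x; simp
    simp [this]
  · classical
    set C := Subgroup.zpowers u with hC
    letI : MulAction C G := MulAction.compHom G C.subtype
    have hsmul : ∀ (g : C) (x : G), g • x = (g : G) * x := fun g x => rfl
    have hfree : ∀ (g : C) (x : G), g • x = x → g = 1 := by
      intro g x hg
      rw [hsmul] at hg
      exact Subtype.ext (mul_eq_right.mp hg)
    have hπ : ∀ (g : C) (x : G), (Equiv.mulLeft u) (g • x) = g • ((Equiv.mulLeft u) x) := by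
      intro g x
      rw [hsmul, hsmul]
      simp only [Equiv.coe_mulLeft]
      rw [← mul_assoc, ← mul_assoc, hc u g]
    obtain ⟨Y, hY, hYd, q, s, h, c, hqg, hqπ, hcc, hqs, hcard, hsign⟩ :=
      sign_decomp_free hfree _ hπ
    have hqfix : ∀ x : G, q ((Equiv.mulLeft u) x) = q x := by
      intro x
      have : (Equiv.mulLeft u) x = (⟨u, Subgroup.mem_zpowers u⟩ : C) • x := by
        rw [hsmul]; rfl
      rw [this, hqg]
    have hh1 : h = 1 := by
      apply Equiv.ext
      intro y
      have h1 : h y = y := by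
        have := (hqπ (s y)).symm.trans (hqfix (s y))
        rwa [hqs] at this
      simp [h1]
    have hw : ∀ y, c y = ⟨u, Subgroup.mem_zpowers u⟩ := by
      intro y
      have := hcc y
      rw [hh1, Equiv.Perm.one_apply, hsmul] at this
      simp only [Equiv.coe_mulLeft] at this
      exact Subtype.ext (mul_right_cancel this).symm
    have hcardC : Fintype.card C = orderOf u := Fintype.card_zpowers
    have hordpos : 0 < orderOf u := orderOf_pos u
    have hYcard : Fintype.card Y = Fintype.card G / orderOf u := by
      rw [hcard, hcardC]
      exact (Nat.mul_div_cancel _ hordpos).symm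
    -- sign of mulRight w on C is a single cycle
    set w : C := ⟨u, Subgroup.mem_zpowers u⟩ with hwdef
    have hw1 : w ≠ 1 := fun hh => hu (congrArg Subtype.val hh)
    have hcyc : (Equiv.mulRight w : Equiv.Perm C).IsCycle := by
      refine ⟨1, ?_, ?_⟩
      · simp only [Equiv.coe_mulRight, one_mul]
        exact hw1
      · intro z _
        obtain ⟨kk, hkk⟩ := Subgroup.mem_zpowers_iff.mp z.2
        refine ⟨kk, ?_⟩
        rw [mulRight_zpow']
        simp only [Equiv.coe_mulRight, one_mul]
        exact Subtype.ext (by rw [SubgroupClass.coe_zpow]; exact hkk)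
    have hsupp : (Equiv.mulRight w : Equiv.Perm C).support = Finset.univ := by
      rw [Finset.eq_univ_iff_forall]
      intro z
      rw [Equiv.Perm.mem_support]
      simp only [Equiv.coe_mulRight]
      intro hz
      exact hw1 (mul_eq_left.mp hz)
    have hsignw : Equiv.Perm.sign (Equiv.mulRight w : Equiv.Perm C)
        = (-1 : ℤˣ) ^ (orderOf u - 1) := by
      rw [hcyc.sign, hsupp, Finset.card_univ, hcardC]
      have : orderOf u = (orderOf u - 1) + 1 := by omega
      rw [this, pow_succ]
      simp
    have hone : ∀ y : Y, Equiv.Perm.sign (Equiv.mulRight (c y) : Equiv.Perm C)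
        = (-1 : ℤˣ) ^ (orderOf u - 1) := fun y => by rw [hw y]; exact hsignw
    rw [hsign, hh1, map_one, one_pow, one_mul,
      Finset.prod_congr rfl fun y _ => hone y, Finset.prod_const, Finset.card_univ, hYcard]
private lemma sign_of_subsingleton {γ : Type*} [Fintype γ] [DecidableEq γ] [Subsingleton γ]
    (ρ : Equiv.Perm γ) : Equiv.Perm.sign ρ = 1 := by
  rw [Equiv.Perm.subsingleton_eq_refl ρ]
  exact Equiv.Perm.sign_refl

private lemma sign_prod_fibers (N : ℕ) : ∀ {α β : Type u} [Fintype α] [DecidableEq α]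
    [Fintype β] [DecidableEq β] (_ : Fintype.card β ≤ N) (f : α → β) (π : Equiv.Perm α)
    (hf : ∀ a, f (π a) = f a),
    Equiv.Perm.sign π = ∏ b : β, Equiv.Perm.sign
      ((π.subtypePerm (fun a => ⟨fun h => (hf a).symm.trans h, fun h => (hf a).trans h⟩))
        : Equiv.Perm {a // f a = b}) := by
  induction N with
  | zero =>
    intro α β _ _ _ _ hN f π hf
    haveI : IsEmpty β := Fintype.card_eq_zero_iff.mp (Nat.le_zero.mp hN)
    haveI : IsEmpty α := ⟨fun a => IsEmpty.false (f a)⟩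
    rw [sign_of_subsingleton π]
    exact (Finset.prod_eq_one fun b _ => sign_of_subsingleton _).symm
  | succ N ih =>
    intro α β _ _ _ _ hN f π hf
    rcases isEmpty_or_nonempty β with hβ | hβ
    · haveI : IsEmpty α := ⟨fun a => IsEmpty.false (f a)⟩
      rw [sign_of_subsingleton π]
      exact (Finset.prod_eq_one fun b _ => sign_of_subsingleton _).symm
    · classical
      obtain ⟨b₀⟩ := hβ
      let ep : Equiv.Perm {a // f a = b₀} :=
        π.subtypePerm (fun a => ⟨fun h => (hf a).symm.trans h, fun h => (hf a).trans h⟩)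
      let en : Equiv.Perm {a // ¬ f a = b₀} :=
        π.subtypePerm (fun a =>
          not_congr ⟨fun h => (hf a).symm.trans h, fun h => (hf a).trans h⟩)
      have hsplit : π = ep.subtypeCongr en := by
        apply Equiv.ext; intro a
        by_cases h : f a = b₀
        · exact ((Equiv.Perm.subtypeCongr.left_apply (p := fun x => f x = b₀) ep en h).symm :
            _ = (ep.subtypeCongr en) a)
        · exact ((Equiv.Perm.subtypeCongr.right_apply (p := fun x => f x = b₀) ep en h).symm :
            _ = (ep.subtypeCongr en) a)
      let β' := {b : β // b ≠ b₀}
      have hcardβ' : Fintype.card β' ≤ N := by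
        have h1 : Fintype.card β' = Fintype.card β - 1 := by
          have h2 := Fintype.card_subtype_compl (fun b : β => b = b₀)
          simp only [Fintype.card_subtype_eq] at h2
          exact h2
        have h2 : 0 < Fintype.card β := Fintype.card_pos_iff.mpr ⟨b₀⟩
        omega
      let f' : {a // ¬ f a = b₀} → β' := fun a => ⟨f a.val, a.prop⟩
      have hf' : ∀ a, f' (en a) = f' a := by
        intro a
        apply Subtype.ext
        exact hf a.val
      have hen := ih hcardβ' f' en hf'
      have hfac : ∀ b' : β',
          Equiv.Perm.sign ((en.subtypePerm (fun a =>
              ⟨fun h => (hf' a).symm.trans h, fun h => (hf' a).trans h⟩))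
            : Equiv.Perm {a // f' a = b'})
          = Equiv.Perm.sign ((π.subtypePerm (fun a =>
              ⟨fun h => (hf a).symm.trans h, fun h => (hf a).trans h⟩))
            : Equiv.Perm {a // f a = b'.val}) := by
        intro b'
        let E : {a // f' a = b'} ≃ {a // f a = b'.val} :=
          { toFun := fun x => ⟨x.val.val, congrArg Subtype.val x.prop⟩
            invFun := fun x => ⟨⟨x.val, fun hpa => b'.prop (x.prop.symm.trans hpa)⟩,
              Subtype.ext x.prop⟩
            left_inv := fun x => by apply Subtype.ext; apply Subtype.ext; rfl
            right_inv := fun x => by apply Subtype.ext; rfl }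
        have hEq : (E.permCongr ((en.subtypePerm (fun a =>
            ⟨fun h => (hf' a).symm.trans h, fun h => (hf' a).trans h⟩))
              : Equiv.Perm {a // f' a = b'}))
            = ((π.subtypePerm (fun a =>
              ⟨fun h => (hf a).symm.trans h, fun h => (hf a).trans h⟩))
            : Equiv.Perm {a // f a = b'.val}) := by
          apply Equiv.ext; intro x; apply Subtype.ext; rfl
        rw [← hEq, Equiv.Perm.sign_permCongr]
      have hgoal : ∏ b : β, Equiv.Perm.sign
          ((π.subtypePerm (fun a => ⟨fun h => (hf a).symm.trans h, fun h => (hf a).trans h⟩))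
            : Equiv.Perm {a // f a = b})
          = Equiv.Perm.sign ep * Equiv.Perm.sign en := by
        rw [← Finset.mul_prod_erase Finset.univ _ (Finset.mem_univ b₀)]
        congr 1
        rw [hen]
        rw [Finset.prod_subtype (p := fun b => b ≠ b₀) (Finset.univ.erase b₀)
          (fun b => by simp [Finset.mem_erase])
          (fun b => Equiv.Perm.sign
            ((π.subtypePerm (fun a => ⟨fun h => (hf a).symm.trans h, fun h => (hf a).trans h⟩))
            : Equiv.Perm {a // f a = b}))]
        exact (Finset.prod_congr rfl fun b' _ => hfac b').symm
      rw [hgoal]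
      conv_lhs => rw [hsplit]
      exact Equiv.Perm.sign_subtypeCongr ep en
private def torsion2 {Q : Type*} [Group Q] (hc : ∀ a b : Q, a * b = b * a) (j : ℕ) :
    Subgroup Q where
  carrier := {x | x ^ (2 ^ j) = 1}
  one_mem' := one_pow _
  mul_mem' := by
    intro x y hx hy
    have hcom : Commute x y := hc x y
    simp only [Set.mem_setOf_eq] at *
    rw [hcom.mul_pow, hx, hy, one_mul]
  inv_mem' := by
    intro x hx
    simp only [Set.mem_setOf_eq] at *
    rw [inv_pow, hx, inv_one]

private lemma torsion2_card_le {Q : Type*} [Group Q] [Finite Q]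
    (hc : ∀ a b : Q, a * b = b * a)
    (hΩ : Nat.card {q : Q // q * q = 1} ≤ 2) :
    ∀ j : ℕ, Nat.card (torsion2 hc j) ≤ 2 ^ j := by
  intro j
  induction j with
  | zero =>
    have h0 : torsion2 hc 0 = ⊥ := by
      apply Subgroup.ext
      intro x
      simp [torsion2, Subgroup.mem_bot]
    rw [h0, Nat.card_eq_fintype_card]
    simp
  | succ j ih =>
    set Sj1 := torsion2 hc (j + 1)
    let f : Sj1 →* Q :=
      { toFun := fun x => (x : Q) * (x : Q)
        map_one' := by simp
        map_mul' := by
          intro x y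
          push_cast
          have h1 : (y : Q) * x = x * y := hc _ _
          rw [mul_assoc, ← mul_assoc (y : Q) (x : Q) (y : Q), h1, mul_assoc, mul_assoc]
      }
    have hker : Nat.card f.ker ≤ 2 := by
      have hinj : Function.Injective
          (fun x : f.ker => (⟨(x : Sj1), x.prop⟩ : {q : Q // q * q = 1})) := by
        intro x y hxy
        have h1 := congrArg (Subtype.val : {q : Q // q * q = 1} → Q) hxy
        apply Subtype.ext
        apply Subtype.ext
        exact h1
      calc Nat.card f.ker ≤ Nat.card {q : Q // q * q = 1} :=
            Nat.card_le_card_of_injective _ hinj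
        _ ≤ 2 := hΩ
    have hrange : Nat.card f.range ≤ Nat.card (torsion2 hc j) := by
      apply Subgroup.card_le_of_le
      rintro y ⟨x, rfl⟩
      show ((x : Q) * x) ^ (2 ^ j) = 1
      have hx : (x : Q) ^ (2 ^ (j + 1)) = 1 := x.prop
      rw [← pow_two, ← pow_mul]
      rw [pow_succ, mul_comm (2 ^ j) 2] at hx
      exact hx
    calc Nat.card Sj1 = Nat.card (Sj1 ⧸ f.ker) * Nat.card f.ker :=
          Subgroup.card_eq_card_quotient_mul_card_subgroup f.ker
      _ = Nat.card f.range * Nat.card f.ker := by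
          rw [Nat.card_congr (QuotientGroup.quotientKerEquivRange f).toEquiv]
      _ ≤ 2 ^ j * 2 := Nat.mul_le_mul (le_trans hrange ih) hker
      _ = 2 ^ (j + 1) := by ring

private lemma exists_full_two_order {Q : Type*} [Group Q] [Finite Q]
    (hc : ∀ a b : Q, a * b = b * a)
    (hΩ : Nat.card {q : Q // q * q = 1} ≤ 2)
    (heven : 2 ∣ Nat.card Q) :
    0 < (Nat.card Q).factorization 2 ∧
      ∃ u : Q, orderOf u = 2 ^ ((Nat.card Q).factorization 2) := by
  classical
  letI : Fintype Q := Fintype.ofFinite Q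
  have hne : Nat.card Q ≠ 0 := Nat.card_pos.ne'
  set a := (Nat.card Q).factorization 2 with ha
  have hapos : 0 < a := Nat.Prime.factorization_pos_of_dvd Nat.prime_two hne heven
  refine ⟨hapos, ?_⟩
  haveI : Fact (Nat.Prime 2) := ⟨Nat.prime_two⟩
  obtain ⟨K, hKcard⟩ := Sylow.exists_subgroup_card_pow_prime (G := Q) 2
    (show 2 ^ a ∣ Nat.card Q from Nat.ordProj_dvd _ 2)
  have hKle : K ≤ torsion2 hc a := by
    intro x hx
    show x ^ (2 ^ a) = 1
    have h1 : orderOf (⟨x, hx⟩ : K) ∣ 2 ^ a := by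
      rw [← hKcard]; exact orderOf_dvd_natCard _
    have h2 : (⟨x, hx⟩ : K) ^ (2 ^ a) = 1 := orderOf_dvd_iff_pow_eq_one.mp h1
    exact congrArg Subtype.val h2
  have hSa : Nat.card (torsion2 hc a) = 2 ^ a :=
    le_antisymm (torsion2_card_le hc hΩ a)
      (hKcard ▸ Subgroup.card_le_of_le hKle)
  have hstrict : ¬ (torsion2 hc a ≤ torsion2 hc (a - 1)) := by
    intro hle
    have := Subgroup.card_le_of_le hle
    rw [hSa] at this
    have h2 := torsion2_card_le hc hΩ (a - 1)
    have h3 : 2 ^ (a - 1) < 2 ^ a := Nat.pow_lt_pow_right (by norm_num) (by omega)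
    omega
  obtain ⟨g, hg, hgn⟩ := SetLike.not_le_iff_exists.mp hstrict
  refine ⟨g, ?_⟩
  have hdvd : orderOf g ∣ 2 ^ a := orderOf_dvd_iff_pow_eq_one.mpr hg
  obtain ⟨b, hb, hbo⟩ := (Nat.dvd_prime_pow Nat.prime_two).mp hdvd
  rcases eq_or_lt_of_le hb with hba | hba
  · rw [hbo, hba]
  · exfalso
    apply hgn
    show g ^ (2 ^ (a - 1)) = 1
    apply orderOf_dvd_iff_pow_eq_one.mp
    rw [hbo]
    exact pow_dvd_pow 2 (by omega)
/-- If `J` is an abelian subgroup of `Sym_n` all of whose nontrivial orbits have even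
size and `r` is coprime to `|J|`, then some even permutation conjugates every element
of `J` to its `r`-th power. -/
theorem abelian_subgroup_power_map_realized_in_alternating (n : ℕ)
    (J : Subgroup (Equiv.Perm (Fin n)))
    (hJ : ∀ a ∈ J, ∀ b ∈ J, a * b = b * a)
    (horb : ∀ i : Fin n, (MulAction.orbit J i).ncard ≠ 1 → Even (MulAction.orbit J i).ncard)
    (r : ℤ) (hr : Int.gcd r (Nat.card J) = 1) :
    ∃ x ∈ alternatingGroup (Fin n), ∀ y ∈ J, x * y * x⁻¹ = y ^ r := by
  classical
  set m := Nat.card J with hm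
  have hmpos : 0 < m := Nat.card_pos
  have hcJ : ∀ a b : J, a * b = b * a := fun a b => Subtype.ext (hJ a a.2 b b.2)
  -- choose an odd exponent k congruent to r mod m and coprime to m
  have hcop : ∀ kk : ℕ, ((kk : ℤ) ≡ r [ZMOD (m : ℤ)]) → Nat.Coprime kk m := by
    intro kk hkk
    have h1 : ((Nat.gcd kk m : ℕ) : ℤ) ∣ (kk : ℤ) :=
      Int.natCast_dvd_natCast.mpr (Nat.gcd_dvd_left _ _)
    have h2 : ((Nat.gcd kk m : ℕ) : ℤ) ∣ (m : ℤ) :=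
      Int.natCast_dvd_natCast.mpr (Nat.gcd_dvd_right _ _)
    have h3 : (m : ℤ) ∣ (r - kk) := Int.ModEq.dvd hkk
    have h4 : ((Nat.gcd kk m : ℕ) : ℤ) ∣ r := by
      have h5 := dvd_add (h2.trans h3) h1
      simpa using h5
    have h6 : ((Nat.gcd kk m : ℕ) : ℤ) ∣ (Int.gcd r (m : ℤ) : ℤ) :=
      Int.dvd_coe_gcd h4 h2
    rw [hm, hr] at h6
    exact Nat.dvd_one.mp (by exact_mod_cast h6)
  obtain ⟨k, hkodd, hkr, hkcop⟩ :
      ∃ k : ℕ, Odd k ∧ ((k : ℤ) ≡ r [ZMOD (m : ℤ)]) ∧ Nat.Coprime k m := by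
    set k0 : ℕ := (r % (m : ℤ)).toNat with hk0def
    have hmz : (0 : ℤ) < (m : ℤ) := by exact_mod_cast hmpos
    have hk0z : (k0 : ℤ) = r % (m : ℤ) := Int.toNat_of_nonneg (Int.emod_nonneg r hmz.ne')
    have hmod : (k0 : ℤ) ≡ r [ZMOD (m : ℤ)] := by
      rw [hk0z]
      show r % (m : ℤ) % (m : ℤ) = r % (m : ℤ)
      exact Int.emod_emod_of_dvd r dvd_rfl
    by_cases hke : Even k0
    · have hmodd : Odd m := by
        by_contra hme
        rw [Nat.not_odd_iff_even] at hme
        have hc2 := hcop k0 hmod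
        obtain ⟨t1, ht1⟩ := hke
        obtain ⟨t2, ht2⟩ := hme
        have : 2 ∣ Nat.gcd k0 m := Nat.dvd_gcd ⟨t1, by omega⟩ ⟨t2, by omega⟩
        rw [hc2] at this
        omega
      have hmod2 : ((k0 + m : ℕ) : ℤ) ≡ r [ZMOD (m : ℤ)] := by
        refine Int.ModEq.trans ?_ hmod
        show ((k0 + m : ℕ) : ℤ) % (m : ℤ) = (k0 : ℤ) % (m : ℤ)
        push_cast
        simpa using Int.add_mul_emod_self_left (a := (k0 : ℤ)) (b := (m : ℤ)) (c := 1)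
      exact ⟨k0 + m, hke.add_odd hmodd, hmod2, hcop _ hmod2⟩
    · exact ⟨k0, Nat.not_even_iff_odd.mp hke, hmod, hcop k0 hmod⟩
  -- an inverse exponent
  obtain ⟨k', hkk'⟩ : ∃ k', (k * k') ≡ 1 [MOD m] := by
    refine ⟨k ^ (Nat.totient m - 1), ?_⟩
    have ht : 0 < Nat.totient m := Nat.totient_pos.mpr hmpos
    have : k * k ^ (Nat.totient m - 1) = k ^ Nat.totient m := by
      rw [← pow_succ']
      congr 1
      omega
    rw [this]
    exact Nat.ModEq.pow_totient hkcop
  have hordJ : ∀ g : J, orderOf g ∣ m := fun g => hm ▸ orderOf_dvd_natCard g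
  have hpowmod : ∀ (g : J) (a b : ℕ), a ≡ b [MOD m] → g ^ a = g ^ b := by
    intro g a b hab
    exact pow_eq_pow_iff_modEq.mpr (Nat.ModEq.of_dvd (hordJ g) hab)
  -- orbit space
  set σR := MulAction.orbitRel J (Fin n) with hσR
  let Y := Quotient σR
  letI : Fintype Y := Fintype.ofFinite Y
  let q : Fin n → Y := fun i => Quotient.mk σR i
  let rp : Y → Fin n := Quotient.out
  have hqrp : ∀ y, q (rp y) = y := fun y => Quotient.out_eq y
  have hqsmul : ∀ (g : J) (i : Fin n), q (g • i) = q i := fun g i =>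
    Quotient.sound (MulAction.orbitRel_apply.mpr (MulAction.mem_orbit i g))
  have hex : ∀ i : Fin n, ∃ g : J, g • rp (q i) = i := by
    intro i
    have h1 : rp (q i) ∈ MulAction.orbit J i := by
      rw [← MulAction.orbitRel_apply (G := J)]
      exact Quotient.exact (hqrp (q i))
    obtain ⟨g, hg⟩ := MulAction.mem_orbit_iff.mp h1
    exact ⟨g⁻¹, by rw [← hg, inv_smul_smul]⟩
  choose w hw using hex
  -- basic stabilizer independence
  have hstab : ∀ (g g' : J) (z : Fin n), g • z = g' • z → ∀ t : ℕ, g ^ t • z = g' ^ t • z := by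
    intro g g' z hz t
    have h1 : (g'⁻¹ * g) • z = z := by rw [mul_smul, hz, inv_smul_smul]
    have h2 : ∀ s : ℕ, (g'⁻¹ * g) ^ s • z = z := by
      intro s
      induction s with
      | zero => simp
      | succ s ih => rw [pow_succ, mul_smul, h1, ih]
    have h3 : g = g' * (g'⁻¹ * g) := by rw [mul_inv_cancel_left]
    calc g ^ t • z = (g' * (g'⁻¹ * g)) ^ t • z := by rw [← h3]
      _ = (g' ^ t * (g'⁻¹ * g) ^ t) • z := by
          rw [(Commute.mul_pow (hcJ g' (g'⁻¹ * g) : Commute g' (g'⁻¹ * g)) t)]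
      _ = g' ^ t • ((g'⁻¹ * g) ^ t • z) := by rw [mul_smul]
      _ = g' ^ t • z := by rw [h2 t]
  -- the two power maps
  let fk : ℕ → Fin n → Fin n := fun t i => (w i) ^ t • rp (q i)
  have hqfk : ∀ t i, q (fk t i) = q i := by
    intro t i
    show q ((w i) ^ t • rp (q i)) = q i
    rw [hqsmul, hqrp]
  have hcomp : ∀ (a b : ℕ), (a * b) ≡ 1 [MOD m] → ∀ i, fk a (fk b i) = i := by
    intro a b hab i
    have hj : q (fk b i) = q i := hqfk b i
    show (w (fk b i)) ^ a • rp (q (fk b i)) = i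
    rw [hj]
    have h1 : w (fk b i) • rp (q i) = (w i) ^ b • rp (q i) := by
      have := hw (fk b i)
      rw [hj] at this
      exact this
    have h2 := hstab _ _ _ h1 a
    rw [h2, ← pow_mul]
    have h3 : (w i) ^ (b * a) = (w i) ^ 1 := hpowmod _ _ _ (by rwa [mul_comm b a])
    rw [h3, pow_one]
    exact hw i
  let x₁ : Equiv.Perm (Fin n) :=
    ⟨fk k, fk k', fun i => hcomp k' k (by rwa [mul_comm k' k]) i, fun i => hcomp k k' hkk' i⟩
  have hx₁v : ∀ i, x₁ i = (w i) ^ k • rp (q i) := fun i => rfl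
  have hx₁q : ∀ i, q (x₁ i) = q i := hqfk k
  have hx₁equiv : ∀ (g : J) (i : Fin n), x₁ (g • i) = g ^ k • x₁ i := by
    intro g i
    have hq1 : q (g • i) = q i := hqsmul g i
    rw [hx₁v, hx₁v, hq1]
    have h1 : w (g • i) • rp (q i) = (g * w i) • rp (q i) := by
      have h2 := hw (g • i)
      rw [hq1] at h2
      rw [h2, mul_smul, hw i]
    have h3 := hstab _ _ _ h1 k
    rw [h3, (Commute.mul_pow (hcJ g (w i) : Commute g (w i)) k), mul_smul]
  -- translation permutations on fibers
  let tOn : J → (y : Y) → Equiv.Perm {i : Fin n // q i = y} := fun u y =>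
    (MulAction.toPerm u : Equiv.Perm (Fin n)).subtypePerm (fun i =>
      ⟨fun h => (hqsmul u i).symm.trans h, fun h => (hqsmul u i).trans h⟩)
  have htOnv : ∀ u y (i : {i : Fin n // q i = y}), ((tOn u y) i).val = u • i.val :=
    fun _ _ _ => rfl
  have htOn1 : ∀ y, tOn 1 y = 1 := by
    intro y
    apply Equiv.ext
    intro i
    apply Subtype.ext
    show (1 : J) • i.val = i.val
    exact one_smul _ _
  -- the restriction of x₁ to a fiber
  let xres : (y : Y) → Equiv.Perm {i : Fin n // q i = y} := fun y =>
    x₁.subtypePerm (fun i =>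
      ⟨fun h => (hx₁q i).symm.trans h, fun h => (hx₁q i).trans h⟩)
  have hxresv : ∀ y (i : {i : Fin n // q i = y}), ((xres y) i).val = x₁ i.val :=
    fun _ _ => rfl
  -- per-orbit: some translation has the same sign as the restriction of x₁
  have hper : ∀ y : Y, ∃ u : J,
      Equiv.Perm.sign (tOn u y) = Equiv.Perm.sign (xres y) := by
    intro y
    set O := {i : Fin n // q i = y} with hO
    -- the fiber is the orbit of rp y
    have hmemO : ∀ i : O, i.val ∈ MulAction.orbit J (rp y) := by
      intro i
      rw [← MulAction.orbitRel_apply (G := J)]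
      exact Quotient.exact (i.prop.trans (hqrp y).symm)
    have hOd : ∀ i : O, ∃ d : J, d • rp y = i.val := fun i =>
      MulAction.mem_orbit_iff.mp (hmemO i)
    have hcardO : Fintype.card O ≠ 1 → Even (Fintype.card O) := by
      intro hne
      have heq : (MulAction.orbit J (rp y)).ncard = Fintype.card O := by
        rw [← Nat.card_coe_set_eq, ← Nat.card_eq_fintype_card]
        apply Nat.card_congr
        exact
          { toFun := fun z => ⟨z.val, by
              have : z.val ∈ MulAction.orbit J (rp y) := z.prop
              rw [← MulAction.orbitRel_apply (G := J)] at this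
              exact (Quotient.sound this).trans (hqrp y)⟩
            invFun := fun i => ⟨i.val, hmemO i⟩
            left_inv := fun z => Subtype.ext rfl
            right_inv := fun i => Subtype.ext rfl }
      have := horb (rp y) (by rwa [heq])
      rwa [heq] at this
    -- stabilizer subgroup
    set H := MulAction.stabilizer J (rp y) with hH
    haveI hHn : H.Normal := by
      constructor
      intro h hh g
      have h1 : g * h * g⁻¹ = h := by rw [hcJ g h, mul_inv_cancel_right]
      rw [h1]
      exact hh
    have hHfix : ∀ h : J, h ∈ H → ∀ i : O, h • i.val = i.val := by
      intro h hh i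
      obtain ⟨d, hd⟩ := hOd i
      have h1 : h • rp y = rp y := hh
      rw [← hd, smul_smul, hcJ h d, ← smul_smul, h1]
    have hstabO : ∀ (g : J) (i : O), g • i.val = i.val → g ∈ H := by
      intro g i hgi
      obtain ⟨d, hd⟩ := hOd i
      show g • rp y = rp y
      have h1 : (d⁻¹ * g * d) = g := by
        rw [mul_assoc, hcJ g d, ← mul_assoc, inv_mul_cancel, one_mul]
      rw [← h1, mul_smul, mul_smul, hd, hgi, ← hd, inv_smul_smul]
    -- the quotient group acting simply transitively on the fiber
    let Qy := J ⧸ H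
    letI : Fintype Qy := Fintype.ofFinite Qy
    letI : DecidableEq Qy := Classical.decEq Qy
    have hcQ : ∀ a b : Qy, a * b = b * a := by
      intro a b
      induction a using Quotient.inductionOn' with
      | h a =>
        induction b using Quotient.inductionOn' with
        | h b =>
          show QuotientGroup.mk a * QuotientGroup.mk b = _
          rw [← QuotientGroup.mk_mul, ← QuotientGroup.mk_mul, hcJ a b]
    letI smulQy : SMul Qy O :=
      ⟨fun qq i => Quotient.liftOn' qq
        (fun g => (⟨g • i.val, by rw [hqsmul]; exact i.prop⟩ : O))
        (by
          intro g g' hgg'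
          apply Subtype.ext
          have hmem : g⁻¹ * g' ∈ H := QuotientGroup.leftRel_apply.mp hgg'
          show g • i.val = g' • i.val
          have h3 : (g⁻¹ * g') • i.val = i.val := hHfix _ hmem i
          calc g • i.val = g • ((g⁻¹ * g') • i.val) := by rw [h3]
            _ = (g * (g⁻¹ * g')) • i.val := (mul_smul g (g⁻¹ * g') i.val).symm
            _ = g' • i.val := by rw [mul_inv_cancel_left])⟩
    have hQsmulv : ∀ (g : J) (i : O), ((QuotientGroup.mk g : Qy) • i).val = g • i.val :=
      fun g i => rfl
    letI mulActQy : MulAction Qy O :=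
      { one_smul := by
          intro i
          apply Subtype.ext
          show (1 : J) • i.val = i.val
          exact one_smul _ _
        mul_smul := by
          intro a b i
          induction a using Quotient.inductionOn' with
          | h a =>
            induction b using Quotient.inductionOn' with
            | h b =>
              apply Subtype.ext
              show (a * b) • i.val = ((QuotientGroup.mk a : Qy) •
                ((QuotientGroup.mk b : Qy) • i)).val
              rw [hQsmulv, hQsmulv, mul_smul] }
    have hfreeQ : ∀ (qq : Qy) (i : O), qq • i = i → qq = 1 := by
      intro qq i hqq
      induction qq using Quotient.inductionOn' with
      | h g =>
        have h1 : g • i.val = i.val := by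
          rw [← hQsmulv g i, hqq]
        exact (QuotientGroup.eq_one_iff g).mpr (hstabO g i h1)
    let i₀ : O := ⟨rp y, hqrp y⟩
    have heQbij : Function.Bijective (fun qq : Qy => qq • i₀) := by
      constructor
      · intro a b hab
        have hab' : a • i₀ = b • i₀ := hab
        have h1 : (b⁻¹ * a) • i₀ = i₀ := by
          rw [mul_smul, hab', inv_smul_smul]
        have h2 := hfreeQ _ _ h1
        exact (inv_mul_eq_one.mp h2).symm
      · intro i
        obtain ⟨d, hd⟩ := hOd i
        exact ⟨QuotientGroup.mk d, Subtype.ext (by rw [hQsmulv]; exact hd)⟩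
    let eQ : Qy ≃ O := Equiv.ofBijective _ heQbij
    have heQv : ∀ qq : Qy, eQ qq = qq • i₀ := fun _ => rfl
    have hcardQO : Nat.card Qy = Fintype.card O := by
      rw [← Nat.card_eq_fintype_card]
      exact Nat.card_congr eQ
    -- equivariance of the restriction
    have hπQ : ∀ (qq : Qy) (i : O), (xres y) (qq • i) = qq ^ k • (xres y) i := by
      intro qq i
      induction qq using Quotient.inductionOn' with
      | h g =>
        apply Subtype.ext
        have h1 : ((QuotientGroup.mk g : Qy) ^ k) = (QuotientGroup.mk (g ^ k) : Qy) :=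
          (QuotientGroup.mk_pow H g k).symm
        rw [h1, hQsmulv, hxresv]
        show x₁ ((QuotientGroup.mk g : Qy) • i).val = g ^ k • x₁ i.val
        rw [hQsmulv, hx₁equiv]
    -- case analysis on the fiber
    by_cases hone : Fintype.card O = 1
    · haveI hOsub : Subsingleton O := Fintype.card_le_one_iff_subsingleton.mp hone.le
      exact ⟨1, by rw [htOn1 y, map_one, sign_of_subsingleton]⟩
    · have hOeven : Even (Fintype.card O) := hcardO hone
      -- the 2-torsion subgroup of Qy
      let Ω : Subgroup Qy :=
        { carrier := {z | z * z = 1}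
          one_mem' := one_mul 1
          mul_mem' := by
            intro a b ha hb
            simp only [Set.mem_setOf_eq] at *
            calc a * b * (a * b) = a * a * (b * b) := by
                  rw [mul_assoc, mul_assoc, ← mul_assoc b a b, hcQ b a, mul_assoc]
              _ = 1 := by rw [ha, hb, mul_one]
          inv_mem' := by
            intro a ha
            simp only [Set.mem_setOf_eq] at *
            rw [← mul_inv_rev, ha, inv_one] }
      letI : Fintype Ω := Fintype.ofFinite Ω
      letI : DecidableEq Ω := Classical.decEq Ω
      have hΩsq : ∀ z : Ω, (z : Qy) * (z : Qy) = 1 := fun z => z.prop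
      have hΩ2 : IsPGroup 2 Ω := by
        intro z
        refine ⟨1, ?_⟩
        apply Subtype.ext
        push_cast
        simp only [pow_zero, one_mul, pow_one, pow_two]
        exact hΩsq z
      haveI : Fact (Nat.Prime 2) := ⟨Nat.prime_two⟩
      obtain ⟨sΩ, hsΩ⟩ := IsPGroup.iff_card.mp hΩ2
      by_cases h4 : 4 ∣ Nat.card Ω
      · -- noncyclic case : the restriction is even
        letI : MulAction Ω O := MulAction.compHom O Ω.subtype
        have hΩsmul : ∀ (ω : Ω) (i : O), ω • i = (ω : Qy) • i := fun ω i => rfl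
        have hfreeΩ : ∀ (ω : Ω) (i : O), ω • i = i → ω = 1 := by
          intro ω i hω
          rw [hΩsmul] at hω
          exact Subtype.ext (hfreeQ _ _ hω)
        have hπΩ : ∀ (ω : Ω) (i : O), (xres y) (ω • i) = ω • (xres y) i := by
          intro ω i
          rw [hΩsmul, hΩsmul, hπQ]
          congr 1
          obtain ⟨t, ht⟩ := hkodd
          rw [ht, pow_add, pow_mul, pow_one]
          rw [show ((ω : Qy) ^ 2) = 1 by rw [pow_two]; exact hΩsq ω]
          rw [one_pow, one_mul]
        have hsq' : ∀ ω : Ω, ω * ω = 1 := fun ω => Subtype.ext (hΩsq ω)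
        have h4' : 4 ∣ Fintype.card Ω := by rwa [← Nat.card_eq_fintype_card]
        have := sign_eq_one_of_free_equivariant hfreeΩ hsq' h4' (xres y) hπΩ
        exact ⟨1, by rw [htOn1 y, map_one, this]⟩
      · -- cyclic case : there is an odd translation
        have hΩle : Nat.card Ω ≤ 2 := by
          rw [hsΩ] at h4 ⊢
          rcases sΩ with _ | _ | s
          · norm_num
          · norm_num
          · exfalso
            apply h4
            have : (4 : ℕ) = 2 ^ 2 := by norm_num
            rw [this]
            exact pow_dvd_pow 2 (by omega)
        have hΩ' : Nat.card {z : Qy // z * z = 1} ≤ 2 := by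
          have : Nat.card {z : Qy // z * z = 1} = Nat.card Ω := by
            apply Nat.card_congr
            exact Equiv.subtypeEquivRight (fun z => Iff.rfl)
          rw [this]
          exact hΩle
        have hQeven : 2 ∣ Nat.card Qy := by
          rw [hcardQO]
          exact hOeven.two_dvd
        obtain ⟨hapos, u0, hu0⟩ := exists_full_two_order hcQ hΩ' hQeven
        -- the translation by u0 is odd
        have hsignL : Equiv.Perm.sign (Equiv.mulLeft u0 : Equiv.Perm Qy) = -1 := by
          rw [sign_mulLeft_comm hcQ u0, hu0]
          have hodd1 : Odd (2 ^ (Nat.card Qy).factorization 2 - 1) := by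
            have h2 : Even (2 ^ (Nat.card Qy).factorization 2) :=
              (Nat.even_pow).mpr ⟨even_two, by omega⟩
            have h3 : 0 < 2 ^ (Nat.card Qy).factorization 2 := Nat.pow_pos (by norm_num)
            rcases h2 with ⟨t, ht⟩
            exact ⟨t - 1, by omega⟩
          have hodd2 : Odd (Fintype.card Qy / 2 ^ (Nat.card Qy).factorization 2) := by
            rw [← Nat.card_eq_fintype_card]
            have hne : Nat.card Qy ≠ 0 := Nat.card_pos.ne'
            have hnd := Nat.not_dvd_ordCompl Nat.prime_two hne
            rw [Nat.odd_iff]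
            omega
          rw [hodd1.neg_one_pow, hodd2.neg_one_pow]
        obtain ⟨u, hu⟩ := QuotientGroup.mk_surjective u0
        have htO : tOn u y = eQ.permCongr (Equiv.mulLeft u0) := by
          apply Equiv.ext
          intro i
          apply Subtype.ext
          rw [Equiv.permCongr_apply]
          rw [htOnv]
          conv_lhs => rw [show i = eQ (eQ.symm i) from (Equiv.apply_symm_apply eQ i).symm]
          rw [heQv, heQv]
          simp only [Equiv.coe_mulLeft]
          show u • ((eQ.symm i) • i₀).val = ((u0 * eQ.symm i) • i₀).val
          rw [← hu, ← hQsmulv]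
          rw [← mul_smul]
        have hsigntO : Equiv.Perm.sign (tOn u y) = -1 := by
          rw [htO, Equiv.Perm.sign_permCongr, hsignL]
        rcases Int.units_eq_one_or (Equiv.Perm.sign (xres y)) with hs | hs
        · exact ⟨1, by rw [htOn1 y, map_one, hs]⟩
        · exact ⟨u, by rw [hsigntO, hs]⟩
  choose v hv using hper
  -- the global per-orbit translation
  let Tv : Equiv.Perm (Fin n) :=
    { toFun := fun i => v (q i) • i
      invFun := fun i => (v (q i))⁻¹ • i
      left_inv := by
        intro i
        show (v (q (v (q i) • i)))⁻¹ • (v (q i) • i) = i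
        rw [hqsmul, inv_smul_smul]
      right_inv := by
        intro i
        show v (q ((v (q i))⁻¹ • i)) • ((v (q i))⁻¹ • i) = i
        rw [hqsmul, smul_inv_smul] }
  have hTvv : ∀ i, Tv i = v (q i) • i := fun i => rfl
  have hqTv : ∀ i, q (Tv i) = q i := fun i => hqsmul _ _
  have hTvequiv : ∀ (g : J) (i : Fin n), Tv (g • i) = g • Tv i := by
    intro g i
    rw [hTvv, hTvv, hqsmul, smul_smul, smul_smul, hcJ (v (q i)) g]
  let x : Equiv.Perm (Fin n) := x₁.trans Tv
  have hxv : ∀ i, x i = Tv (x₁ i) := fun i => rfl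
  have hxq : ∀ i, q (x i) = q i := by
    intro i
    rw [hxv, hqTv, hx₁q]
  have hxequiv : ∀ (g : J) (i : Fin n), x (g • i) = g ^ k • x i := by
    intro g i
    rw [hxv, hx₁equiv, hTvequiv, hxv]
  -- the sign of x is one
  have hsignx : Equiv.Perm.sign x = 1 := by
    have hD := sign_prod_fibers (Fintype.card Y) (le_refl _) q x hxq
    rw [hD]
    apply Finset.prod_eq_one
    intro y _
    have hsplit : (x.subtypePerm (fun i =>
        ⟨fun h => (hxq i).symm.trans h, fun h => (hxq i).trans h⟩)
        : Equiv.Perm {i // q i = y}) = (tOn (v y) y) * (xres y) := by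
      apply Equiv.ext
      intro i
      apply Subtype.ext
      show x i.val = ((tOn (v y) y) ((xres y) i)).val
      rw [htOnv, hxresv, hxv, hTvv,
        show q (x₁ i.val) = y from (hx₁q i.val).trans i.prop]
    rw [hsplit, map_mul, hv y]
    exact Int.units_mul_self _
  -- conclusion
  refine ⟨x, Equiv.Perm.mem_alternatingGroup.mpr hsignx, ?_⟩
  intro y0 hy0
  set g : J := (⟨y0, hy0⟩ : J) with hg
  have hconj : x * y0 * x⁻¹ = y0 ^ k := by
    apply Equiv.ext
    intro p
    rw [Equiv.Perm.mul_apply, Equiv.Perm.mul_apply]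
    have h1 : y0 (x⁻¹ p) = g • (x⁻¹ p) := rfl
    rw [h1, hxequiv g (x⁻¹ p)]
    have h2 : x (x⁻¹ p) = p := Equiv.apply_symm_apply x p
    rw [h2]
    show ((g ^ k : J) : Equiv.Perm (Fin n)) p = (y0 ^ k) p
    have h6 : ((g ^ k : J) : Equiv.Perm (Fin n)) = y0 ^ k := by
      push_cast
      rfl
    rw [h6]
  have hordy : orderOf y0 ∣ m := by
    have h3 : orderOf (J.subtype g) = orderOf g :=
      orderOf_injective J.subtype (Subgroup.subtype_injective J) g
    have h4 : J.subtype g = y0 := rfl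
    rw [← h4, h3]
    exact hordJ g
  have h5 : (k : ℤ) ≡ r [ZMOD ((orderOf y0 : ℕ) : ℤ)] :=
    Int.ModEq.of_dvd (Int.natCast_dvd_natCast.mpr hordy) hkr
  have hyk : y0 ^ ((k : ℕ) : ℤ) = y0 ^ r := zpow_eq_zpow_iff_modEq.mpr h5
  rw [hconj, ← zpow_natCast, hyk]
end

section
/- Let W be the hyperoctahedral group of rank n (the Weyl group of type B_n), realized as the centralizer in Sym_{2n} of a fixed-point-free involution z. Let J be an abelian subgroup of W and r an integer coprime to |J|. Then there exists x ∈ W with x * y * x⁻¹ = y^r for all y ∈ J. -/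
open MulAction Equiv

/-- Core lemma: if `H` is an abelian subgroup of a permutation group and `r` has an
"inverse" exponent `u` on `H`, then some permutation conjugates each `y ∈ H` to `y ^ r`. -/
lemma abelian_perm_power_conj {α : Type*} (H : Subgroup (Equiv.Perm α))
    (hcomm : ∀ a b : H, a * b = b * a)
    (r u : ℤ) (hu : ∀ h : H, h ^ (r * u) = h) :
    ∃ x : Equiv.Perm α, ∀ y ∈ H, x * y * x⁻¹ = y ^ r := by
  classical
  set s := MulAction.orbitRel H α with hs
  let rep : α → α := fun a => (Quotient.mk s a).out
  have hrep_rel : ∀ a : α, ∃ h : H, h • rep a = a := by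
    intro a
    have h1 : Quotient.mk s (rep a) = Quotient.mk s a := Quotient.out_eq _
    have h2 : s (rep a) a := Quotient.exact h1
    have h3 : rep a ∈ MulAction.orbit H a := MulAction.orbitRel_apply.mp h2
    obtain ⟨g, hg⟩ := MulAction.mem_orbit_iff.mp h3
    exact ⟨g⁻¹, by rw [← hg, inv_smul_smul]⟩
  choose g hg using hrep_rel
  have hrep_inv : ∀ (h : H) (a : α), rep (h • a) = rep a := by
    intro h a
    have : Quotient.mk s (h • a) = Quotient.mk s a := by
      apply Quotient.sound
      exact MulAction.orbitRel_apply.mpr (MulAction.mem_orbit a h)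
    simpa [rep] using congrArg Quotient.out this
  -- key well-definedness
  have hkey : ∀ (a : α) (h k : H) (m : ℤ), h • rep a = k • rep a →
      (h ^ m) • rep a = (k ^ m) • rep a := by
    intro a h k m hhk
    have hw : (k⁻¹ * h) • rep a = rep a := by
      rw [mul_smul, hhk, inv_smul_smul]
    have hwm : ((k⁻¹ * h) ^ m) • rep a = rep a := by
      have : (k⁻¹ * h) ∈ MulAction.stabilizer H (rep a) := hw
      have : (k⁻¹ * h) ^ m ∈ MulAction.stabilizer H (rep a) := zpow_mem this m
      exact this
    have hcom : Commute k (k⁻¹ * h) := hcomm _ _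
    calc (h ^ m) • rep a = ((k * (k⁻¹ * h)) ^ m) • rep a := by rw [mul_inv_cancel_left]
      _ = (k ^ m * (k⁻¹ * h) ^ m) • rep a := by rw [hcom.mul_zpow]
      _ = (k ^ m) • (((k⁻¹ * h) ^ m) • rep a) := by rw [mul_smul]
      _ = (k ^ m) • rep a := by rw [hwm]
  let f : ℤ → α → α := fun m a => ((g a) ^ m) • rep a
  have hrep_idem : ∀ a : α, rep (rep a) = rep a := by
    intro a
    have h1 : Quotient.mk s (rep a) = Quotient.mk s a := Quotient.out_eq _
    simpa [rep] using congrArg Quotient.out h1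
  have hfrep : ∀ (m : ℤ) (a : α), rep (f m a) = rep a := by
    intro m a
    show rep ((g a ^ m) • rep a) = rep a
    rw [hrep_inv, hrep_idem]
  have hfcomp : ∀ (m m' : ℤ) (a : α), f m' (f m a) = ((g a) ^ (m * m')) • rep a := by
    intro m m' a
    have h1 : g (f m a) • rep a = (g a) ^ m • rep a := by
      have := hg (f m a)
      rwa [hfrep] at this
    have h2 := hkey a (g (f m a)) ((g a) ^ m) m' h1
    calc f m' (f m a) = (g (f m a) ^ m') • rep (f m a) := rfl
      _ = (g (f m a) ^ m') • rep a := by rw [hfrep]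
      _ = (((g a) ^ m) ^ m') • rep a := h2
      _ = ((g a) ^ (m * m')) • rep a := by rw [← zpow_mul]
  have hur : ∀ h : H, h ^ (u * r) = h := by
    intro h; rw [mul_comm]; exact hu h
  have hl : Function.LeftInverse (f u) (f r) := by
    intro a; rw [hfcomp, hu, hg]
  have hrt : Function.RightInverse (f u) (f r) := by
    intro a; rw [hfcomp, hur, hg]
  refine ⟨⟨f r, f u, hl, hrt⟩, ?_⟩
  set x : Equiv.Perm α := ⟨f r, f u, hl, hrt⟩ with hx
  intro y hy
  have key : ∀ a : α, f r (y a) = (y ^ r) (f r a) := by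
    intro a
    set Y : H := ⟨y, hy⟩ with hY
    have h1 : g (Y • a) • rep a = (Y * g a) • rep a := by
      have := hg (Y • a)
      rw [hrep_inv] at this
      rw [this, mul_smul, hg]
    have h2 := hkey a (g (Y • a)) (Y * g a) r h1
    have hcom : Commute Y (g a) := hcomm _ _
    have h3 : ((Y * g a) ^ r) • rep a = (Y ^ r) • (((g a) ^ r) • rep a) := by
      rw [hcom.mul_zpow, mul_smul]
    have h4 : f r (y a) = (Y ^ r) • (f r a) := by
      show (g (Y • a) ^ r) • rep (Y • a) = (Y ^ r) • (f r a)
      rw [hrep_inv, h2, h3]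
    rw [h4]
    show (((Y ^ r : H) : Equiv.Perm α)) (f r a) = (y ^ r) (f r a)
    norm_cast
  ext a
  have hxa : ∀ b, x b = f r b := fun b => rfl
  have : x (y (x⁻¹ a)) = (y ^ r) (x (x⁻¹ a)) := by
    rw [hxa, hxa, key]
  simp only [Equiv.Perm.mul_apply]
  rw [this]; exact congrArg (y ^ r) (x.apply_symm_apply a)

/-- Let `W` be the Weyl group of type `B_n`, realized as the centralizer in `Sym_{2n}`
of a fixed-point-free involution `z`.  If `J ≤ W` is abelian and `r` is coprime to
`|J|`, then some `x ∈ W` conjugates every element of `J` to its `r`-th power. -/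
theorem hyperoctahedral_abelian_subgroup_power_map (n : ℕ)
    (z : Equiv.Perm (Fin (2 * n))) (hz : z ^ 2 = 1) (hzf : ∀ i, z i ≠ i)
    (J : Subgroup (Equiv.Perm (Fin (2 * n))))
    (hJW : J ≤ Subgroup.centralizer {z})
    (hJ : ∀ a ∈ J, ∀ b ∈ J, a * b = b * a)
    (r : ℤ) (hr : Int.gcd r (Nat.card J) = 1) :
    ∃ x ∈ Subgroup.centralizer {z}, ∀ y ∈ J, x * y * x⁻¹ = y ^ r := by
  classical
  set c : ℕ := Nat.card J with hc
  have hcop : IsCoprime r (c : ℤ) := Int.isCoprime_iff_gcd_eq_one.mpr hr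
  -- powers of elements of J
  have hJpow : ∀ w ∈ J, w ^ c = 1 := by
    intro w hw
    have h1 : (⟨w, hw⟩ : J) ^ c = 1 := pow_card_eq_one'
    have h2 := congrArg (Subtype.val) h1
    simpa using h2
  -- choose an odd exponent congruent to r mod c
  set r' : ℤ := if Even r then r + (c : ℤ) else r with hr'
  have hr'cop : IsCoprime r' (c : ℤ) := by
    by_cases h : Even r
    · simp only [hr', if_pos h]
      have := hcop.add_mul_left_left 1
      simpa using this
    · simpa only [hr', if_neg h] using hcop
  have hoddr' : Odd r' := by
    by_cases h : Even r
    · have hcodd : Odd (c : ℤ) := by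
        rcases Int.even_or_odd (c : ℤ) with hce | hco
        · exfalso
          obtain ⟨a, b, hab⟩ := hcop
          have h2r : (2 : ℤ) ∣ r := h.two_dvd
          have h2c : (2 : ℤ) ∣ (c : ℤ) := hce.two_dvd
          have : (2 : ℤ) ∣ 1 := by
            rw [← hab]
            exact dvd_add (Dvd.dvd.mul_left h2r a) (Dvd.dvd.mul_left h2c b)
          norm_num at this
        · exact hco
      simp only [hr', if_pos h]
      exact h.add_odd hcodd
    · simp only [hr', if_neg h]
      exact Int.not_even_iff_odd.mp h
  have hcop2 : IsCoprime r' (2 : ℤ) := by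
    obtain ⟨k, hk⟩ := hoddr'
    exact ⟨1, -k, by linarith⟩
  -- the subgroup generated by J and z
  set S : Set (Equiv.Perm (Fin (2 * n))) := ↑J ∪ {z} with hS
  set H : Subgroup (Equiv.Perm (Fin (2 * n))) := Subgroup.closure S with hH
  have hJH : J ≤ H := by
    intro j hj
    exact Subgroup.subset_closure (Or.inl hj)
  have hzH : z ∈ H := Subgroup.subset_closure (Or.inr rfl)
  -- H is abelian
  have hSc : ∀ a ∈ S, ∀ b ∈ S, Commute a b := by
    intro a ha b hb
    rcases ha with ha | ha <;> rcases hb with hb | hb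
    · exact hJ a ha b hb
    · have hb' : b = z := hb
      subst hb'
      exact ((Subgroup.mem_centralizer_iff.mp (hJW ha)) b (Set.mem_singleton b)).symm
    · have ha' : a = z := ha
      subst ha'
      exact (Subgroup.mem_centralizer_iff.mp (hJW hb)) a (Set.mem_singleton a)
    · have ha' : a = z := ha
      have hb' : b = z := hb
      rw [ha', hb']
  have hcH : ∀ a ∈ H, ∀ b ∈ H, Commute a b := by
    intro a ha b hb
    induction ha, hb using Subgroup.closure_induction₂ with
    | mem x y hx hy => exact hSc x hx y hy
    | one_left x hx => exact Commute.one_left x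
    | one_right x hx => exact Commute.one_right x
    | mul_left x y w hx hy hw h1 h2 => exact h1.mul_left h2
    | mul_right y w x hy hw hx h1 h2 => exact h1.mul_right h2
    | inv_left x y hx hy h1 => exact h1.inv_left
    | inv_right x y hx hy h1 => exact h1.inv_right
  have hcommH : ∀ a b : H, a * b = b * a := by
    intro a b
    exact Subtype.ext (hcH a a.2 b b.2)
  -- exponent bound for H
  have hNcoe : ∀ w ∈ H, w ^ (2 * c) = 1 := by
    intro w hw
    induction hw using Subgroup.closure_induction with
    | mem x hx =>
      rcases hx with hx | hx
      · rw [mul_comm 2 c, pow_mul, hJpow x hx, one_pow]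
      · rcases hx with rfl
        rw [pow_mul, hz, one_pow]
    | one => exact one_pow _
    | mul x y hx hy h1 h2 =>
      rw [(hcH x hx y hy).mul_pow, h1, h2, one_mul]
    | inv x hx h1 =>
      rw [inv_pow, h1, inv_one]
  have hN : ∀ h : H, h ^ (2 * c) = 1 := by
    intro h
    have := hNcoe (h : Equiv.Perm (Fin (2 * n))) h.2
    ext1
    simpa using this
  -- Bezout
  obtain ⟨u, v, huv⟩ : IsCoprime r' ((2 * c : ℕ) : ℤ) := by
    push_cast
    exact hcop2.mul_right hr'cop
  have hu : ∀ h : H, h ^ (r' * u) = h := by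
    intro h
    have heq : r' * u = 1 + ((2 * c : ℕ) : ℤ) * (-v) := by linarith
    have hNz : h ^ (((2 * c : ℕ) : ℤ)) = 1 := by
      rw [zpow_natCast, hN]
    rw [heq, zpow_add, zpow_one, zpow_mul, hNz, one_zpow, mul_one]
  obtain ⟨x, hx⟩ := abelian_perm_power_conj H hcommH r' u hu
  -- x centralizes z
  have hzr' : z ^ r' = z := by
    obtain ⟨k, hk⟩ := hoddr'
    have h2 : z ^ (2 : ℤ) = 1 := by
      rw [show (2 : ℤ) = ((2 : ℕ) : ℤ) from rfl, zpow_natCast, hz]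
    rw [hk, zpow_add, zpow_mul, h2, one_zpow, one_mul, zpow_one]
  have hxz : x * z * x⁻¹ = z := by
    rw [hx z hzH, hzr']
  have hxc : x ∈ Subgroup.centralizer {z} := by
    rw [Subgroup.mem_centralizer_iff]
    rintro g rfl
    have h2 : x * g = g * x := by
      calc x * g = (x * g * x⁻¹) * x := by group
        _ = g * x := by rw [hxz]
    exact h2.symm
  refine ⟨x, hxc, ?_⟩
  intro y hy
  rw [hx y (hJH hy)]
  -- y ^ r' = y ^ r
  by_cases h : Even r
  · have hyc : y ^ ((c : ℕ) : ℤ) = 1 := by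
      rw [zpow_natCast, hJpow y hy]
    simp only [hr', if_pos h]
    rw [zpow_add, hyc, mul_one]
  · simp only [hr', if_neg h]
end

section
/- Let W be a finite group, g ∈ W, and suppose every abelian subgroup of W is inverted by some involution of W. Let N_g be the stabilizer in W of the set {g, g⁻¹} and C_g the centralizer of g. If g² ≠ 1 and x ∈ N_g \ C_g, then for every y ∈ C_g, the element x y x⁻¹ is conjugate within C_g to y⁻¹. -/
/-- Let `W` be a finite group in which every abelian subgroup is inverted by an involution.
If `g² ≠ 1` and `x` normalizes `{g, g⁻¹}` but does not centralize `g`, then for every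
`y ∈ C_W(g)`, the element `x y x⁻¹` is conjugate within `C_W(g)` to `y⁻¹`. -/
theorem conj_in_centralizer_inverts
    (W : Type) [Group W] [Finite W]
    (hinv : ∀ J : Subgroup W, (∀ a ∈ J, ∀ b ∈ J, a * b = b * a) →
      ∃ t : W, t ^ 2 = 1 ∧ ∀ a ∈ J, t * a * t⁻¹ = a⁻¹)
    (g : W) (hg : g ^ 2 ≠ 1)
    (x : W) (hxN : x * g * x⁻¹ = g ∨ x * g * x⁻¹ = g⁻¹) (hxC : x * g * x⁻¹ ≠ g)
    (y : W) (hy : y ∈ Subgroup.centralizer {g}) :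
    ∃ c ∈ Subgroup.centralizer {g}, c * (x * y * x⁻¹) * c⁻¹ = y⁻¹ := by
  have hx : x * g * x⁻¹ = g⁻¹ := hxN.resolve_left hxC
  have hgy : g * y = y * g := Subgroup.mem_centralizer_iff.mp hy g rfl
  -- the subgroup generated by g and y is abelian
  have hcomm : ∀ a ∈ Subgroup.closure ({g, y} : Set W),
      ∀ b ∈ Subgroup.closure ({g, y} : Set W), a * b = b * a := by
    intro a ha b hb
    have hpair : ∀ u ∈ ({g, y} : Set W), ∀ v ∈ ({g, y} : Set W), Commute u v := by
      rintro u (rfl | rfl) v (rfl | rfl)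
      · exact Commute.refl _
      · exact hgy
      · exact hgy.symm
      · exact Commute.refl _
    refine Subgroup.closure_induction₂
      (p := fun u v _ _ => Commute u v)
      (fun u v hu hv => hpair u hu v hv)
      (fun v _ => Commute.one_left v) (fun u _ => Commute.one_right u)
      (fun u v w _ _ _ h1 h2 => h1.mul_left h2)
      (fun v w u _ _ _ h1 h2 => h1.mul_right h2)
      (fun u v _ _ h => h.inv_left) (fun u v _ _ h => h.inv_right) ha hb
  obtain ⟨t, ht2, htI⟩ := hinv _ hcomm
  have hgmem : g ∈ Subgroup.closure ({g, y} : Set W) :=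
    Subgroup.subset_closure (by simp)
  have hymem : y ∈ Subgroup.closure ({g, y} : Set W) :=
    Subgroup.subset_closure (by simp)
  have htg : t * g * t⁻¹ = g⁻¹ := htI g hgmem
  have hty : t * y * t⁻¹ = y⁻¹ := htI y hymem
  -- x⁻¹ also inverts g
  have hx' : x⁻¹ * g * x = g⁻¹ := by
    have h1 : x * g⁻¹ * x⁻¹ = g := by
      have := congrArg (·⁻¹) hx
      simpa [mul_assoc] using this
    calc x⁻¹ * g * x = x⁻¹ * (x * g⁻¹ * x⁻¹) * x := by rw [h1]
    _ = g⁻¹ := by group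
  refine ⟨t * x⁻¹, ?_, ?_⟩
  · rw [Subgroup.mem_centralizer_iff]
    rintro h rfl
    have key : (t * x⁻¹) * h * (t * x⁻¹)⁻¹ = h := by
      have : (t * x⁻¹) * h * (t * x⁻¹)⁻¹ = t * (x⁻¹ * h * x) * t⁻¹ := by group
      rw [this, hx']
      have := congrArg (·⁻¹) htg
      simpa [mul_assoc] using this
    calc h * (t * x⁻¹) = ((t * x⁻¹) * h * (t * x⁻¹)⁻¹) * (t * x⁻¹) := by rw [key]
    _ = (t * x⁻¹) * h := by group
  · calc (t * x⁻¹) * (x * y * x⁻¹) * (t * x⁻¹)⁻¹ = t * y * t⁻¹ := by group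
    _ = y⁻¹ := hty
end

section
/- Let H be a Hopf algebra over an algebraically closed field of characteristic ≠ 2 with S² = id, and let V be a finite-dimensional irreducible self-dual H-module. If ⟨-,-⟩ is a nonzero H-invariant bilinear form on V, then its twist [v,w] := ⟨w,v⟩ is also H-invariant, and there is a sign α ∈ {+1, -1}, depending only on V, with ⟨w,v⟩ = α⟨v,w⟩ for all v, w. In particular, the form is either symmetric or skew-symmetric. -/
open HopfAlgebra

/-- Let `H` be a Hopf algebra over an algebraically closed field of characteristic
`≠ 2` with `S² = id`, and `V` a finite-dimensional irreducible self-dual `H`-module.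
If `B` is a nonzero `H`-invariant bilinear form on `V` (invariance:
`B(h·v, w) = B(v, S(h)·w)`), then its twist `[v,w] := B(w,v)` is also `H`-invariant,
and there is a sign `α ∈ {1, -1}`, depending only on `V` (the same for every nonzero
invariant form), with `B(w,v) = α B(v,w)` for all `v, w`; in particular `B` is either
symmetric or skew-symmetric. -/
theorem invariant_form_symmetric_or_skew
    (k : Type) [Field k] [IsAlgClosed k] (hchar : ringChar k ≠ 2)
    (H : Type) [Ring H] [HopfAlgebra k H]
    (hS2 : ∀ h : H, antipode (R := k) (antipode (R := k) h) = h)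
    (V : Type) [AddCommGroup V] [Module k V] [Module H V] [IsScalarTower k H V]
    [FiniteDimensional k V]
    (hirr : IsSimpleModule H V)
    (e : V ≃ₗ[k] Module.Dual k V)
    (he : ∀ (h : H) (v w : V), e (h • v) w = e v (antipode (R := k) h • w))
    (B : V →ₗ[k] V →ₗ[k] k) (hB : B ≠ 0)
    (hBinv : ∀ (h : H) (v w : V), B (h • v) w = B v (antipode (R := k) h • w)) :
    (∀ (h : H) (v w : V), B w (h • v) = B (antipode (R := k) h • w) v) ∧
    ∃ α : k, (α = 1 ∨ α = -1) ∧
      (∀ B' : V →ₗ[k] V →ₗ[k] k, B' ≠ 0 →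
        (∀ (h : H) (v w : V), B' (h • v) w = B' v (antipode (R := k) h • w)) →
        ∀ v w : V, B' w v = α * B' v w) := by
  have := IsSimpleModule.nontrivial H V
  -- twist invariance holds for every invariant form
  have twist_inv : ∀ (B' : V →ₗ[k] V →ₗ[k] k),
      (∀ (h : H) (v w : V), B' (h • v) w = B' v (antipode (R := k) h • w)) →
      ∀ (h : H) (v w : V), B' w (h • v) = B' (antipode (R := k) h • w) v := by
    intro B' hinv h v w
    have := hinv (antipode (R := k) h) w v
    rw [hS2] at this
    exact this.symm
  -- a nonzero invariant form is injective as map into the dual (simplicity)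
  have inj : ∀ (B' : V →ₗ[k] V →ₗ[k] k), B' ≠ 0 →
      (∀ (h : H) (v w : V), B' (h • v) w = B' v (antipode (R := k) h • w)) →
      Function.Injective B' := by
    intro B' hB' hinv
    let p : Submodule H V :=
      { carrier := {v | B' v = 0}
        add_mem' := by
          intro a b ha hb
          simp only [Set.mem_setOf_eq] at *
          rw [map_add, ha, hb, add_zero]
        zero_mem' := by simp
        smul_mem' := by
          intro h v hv
          simp only [Set.mem_setOf_eq] at *
          ext w
          rw [LinearMap.zero_apply, hinv h v w, hv, LinearMap.zero_apply]
 }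
    rcases eq_bot_or_eq_top p with hbot | htop
    · have hmem : ∀ v : V, B' v = 0 → v = 0 := by
        intro v hv
        have hvp : v ∈ p := hv
        rw [hbot] at hvp
        simpa using hvp
      intro a b hab
      have h0 : a - b = 0 := hmem _ (by rw [map_sub, hab, sub_self])
      exact sub_eq_zero.mp h0
    · exfalso
      apply hB'
      ext v w
      have hvp : v ∈ p := htop ▸ Submodule.mem_top
      rw [show B' v = 0 from hvp]
      simp
  -- key: every nonzero invariant form is a nonzero multiple of B
  have key : ∀ (B' : V →ₗ[k] V →ₗ[k] k), B' ≠ 0 →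
      (∀ (h : H) (v w : V), B' (h • v) w = B' v (antipode (R := k) h • w)) →
      ∃ c : k, c ≠ 0 ∧ B' = c • B := by
    intro B' hB' hinv
    have hBinj := inj B hB hBinv
    have hsurj : Function.Surjective B :=
      (LinearMap.injective_iff_surjective_of_finrank_eq_finrank
        (Module.finrank_linearMap_self k k V).symm).mp hBinj
    let eB : V ≃ₗ[k] (V →ₗ[k] k) := LinearEquiv.ofBijective B ⟨hBinj, hsurj⟩
    let f : V →ₗ[k] V := eB.symm.toLinearMap ∘ₗ B'
    have hf : ∀ v, B (f v) = B' v := fun v => eB.apply_symm_apply (B' v)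
    have hfequiv : ∀ (h : H) (v : V), f (h • v) = h • f v := by
      intro h v
      apply hBinj
      ext w
      rw [hf (h • v), hinv h v w, hBinv h (f v) w, hf v]
    obtain ⟨μ, hμ⟩ := Module.End.exists_eigenvalue (K := k) (V := V) f
    obtain ⟨v₀, hv₀⟩ := hμ.exists_hasEigenvector
    -- the eigenspace, as an H-submodule
    let q : Submodule H V :=
      { carrier := {v | f v = μ • v}
        add_mem' := by
          intro a b ha hb
          simp only [Set.mem_setOf_eq] at *
          rw [map_add, ha, hb, smul_add]
        zero_mem' := by simp
        smul_mem' := by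
          intro h v hv
          simp only [Set.mem_setOf_eq] at *
          rw [hfequiv h v, hv, smul_comm] }
    have hq : q = ⊤ := by
      rcases eq_bot_or_eq_top q with hbot | htop
      · exfalso
        have hmem : v₀ ∈ q := hv₀.apply_eq_smul
        rw [hbot] at hmem
        exact hv₀.2 (by simpa using hmem)
      · exact htop
    have hall : ∀ v : V, f v = μ • v := by
      intro v
      have : v ∈ q := hq ▸ Submodule.mem_top
      exact this
    have hBeq : B' = μ • B := by
      ext v w
      rw [← hf v, hall v, map_smul]
      simp
    refine ⟨μ, ?_, hBeq⟩
    intro hμ0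
    apply hB'
    rw [hBeq, hμ0, zero_smul]
  -- twist of B is nonzero and invariant
  have hflip_ne : B.flip ≠ 0 := by
    intro h0
    apply hB
    ext v w
    have : B.flip w v = 0 := by rw [h0]; rfl
    simpa using this
  have hflip_inv : ∀ (h : H) (v w : V),
      B.flip (h • v) w = B.flip v (antipode (R := k) h • w) := by
    intro h v w
    exact twist_inv B hBinv h v w
  obtain ⟨α, hα0, hαeq⟩ := key B.flip hflip_ne hflip_inv
  have hflipB : ∀ v w : V, B w v = α * B v w := by
    intro v w
    have : B.flip v w = (α • B) v w := by rw [hαeq]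
    simpa using this
  -- α² = 1
  have hα2 : α * α = 1 := by
    obtain ⟨v, hv⟩ : ∃ v, B v ≠ 0 := by
      by_contra hc
      push_neg at hc
      exact hB (by ext v w; rw [hc v]; simp)
    obtain ⟨w, hw⟩ : ∃ w, B v w ≠ 0 := by
      by_contra hc
      push_neg at hc
      exact hv (by ext w; rw [hc w]; simp)
    have h1 : B v w = α * B w v := hflipB w v
    have h2 : B w v = α * B v w := hflipB v w
    rw [h2] at h1
    have h3 : (α * α - 1) * B v w = 0 := by linear_combination -h1
    rcases mul_eq_zero.mp h3 with h | h
    · exact sub_eq_zero.mp h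
    · exact absurd h hw
  refine ⟨twist_inv B hBinv, α, mul_self_eq_one_iff.mp hα2, ?_⟩
  intro B' hB' hinv v w
  obtain ⟨c, hc0, hceq⟩ := key B' hB' hinv
  rw [hceq]
  simp only [LinearMap.smul_apply, smul_eq_mul]
  rw [hflipB v w]
  ring
end
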